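/- Let w, u ∈ W with w ≤ wu in the Bruhat order, and let λ be a dominant integral weight. Then w(λ − uλ) is a nonnegative integer linear combination of positive roots. -/

import Mathlib

open RealInnerProductSpace

noncomputable section

variable {V : Type*} [NormedAddCommGroup V] [InnerProductSpace ℝ V] [FiniteDimensional ℝ V]

/-- Orthogonal reflection of `V` in the hyperplane orthogonal to `α`. -/
def reflRoot (α : V) : V ≃ₗᵢ[ℝ] V := Submodule.reflection (ℝ ∙ α)ᗮ

/-- The inversion set `Φ_w = w⁻¹Δ⁻ ∩ Δ⁺ = {α ∈ Δ⁺ | w α ∈ Δ⁻}`, where `Δ⁻ = -Δ⁺`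
(so `w α ∈ Δ⁻ ↔ -(w α) ∈ Δ⁺`). -/
def invSet (pos : Set V) (w : V ≃ₗᵢ[ℝ] V) : Set V := {α | α ∈ pos ∧ -(w α) ∈ pos}

/-- The length of `w`, i.e. the number of inversions of `w`. -/
def invLen (pos : Set V) (w : V ≃ₗᵢ[ℝ] V) : ℕ := (invSet pos w).ncard

/-- The Bruhat order on the Weyl group: the reflexive-transitive closure of the relation
`x ⋖ x * s_α` (right multiplication by the reflection in a root `α`) whenever the length
(= number of inversions) increases. -/
def bruhatLE (roots pos : Set V) : (V ≃ₗᵢ[ℝ] V) → (V ≃ₗᵢ[ℝ] V) → Prop :=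
  Relation.ReflTransGen
    (fun x y => (∃ α ∈ roots, y = x * reflRoot α) ∧ invLen pos x < invLen pos y)

/-- A reduced crystallographic root system in the real inner product space `V`, together with
a fixed choice of positive roots `pos` (the negative roots being `-pos`). -/
structure RootSystemCtx (V : Type*) [NormedAddCommGroup V] [InnerProductSpace ℝ V]
    [FiniteDimensional ℝ V] where
  /-- the set of roots `Δ` -/
  roots : Set V
  /-- the set of positive roots `Δ⁺` -/
  pos : Set V
  finite : roots.Finite
  nonzero : ∀ α ∈ roots, α ≠ (0 : V)
  /-- reduced: the only multiples of a root which are roots are `±α` -/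
  reduced : ∀ α ∈ roots, ∀ t : ℝ, t • α ∈ roots → t = 1 ∨ t = -1
  /-- crystallographic: `⟨β, α∨⟩ ∈ ℤ` for all roots `α`, `β` -/
  crystallographic : ∀ α ∈ roots, ∀ β ∈ roots, ∃ z : ℤ, 2 * ⟪β, α⟫ / ⟪α, α⟫ = (z : ℝ)
  /-- the set of roots is stable under the reflection in each root -/
  reflect_mem : ∀ α ∈ roots, ∀ β ∈ roots, reflRoot α β ∈ roots
  pos_subset : pos ⊆ roots
  /-- every root is positive or negative -/
  mem_pos_or : ∀ α ∈ roots, α ∈ pos ∨ -α ∈ pos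
  /-- no root is both positive and negative -/
  not_pos_and_neg : ∀ α ∈ pos, -α ∉ pos
  /-- positivity is closed under addition -/
  pos_add : ∀ α ∈ pos, ∀ β ∈ pos, α + β ∈ roots → α + β ∈ pos

namespace RootSystemCtx

variable {V : Type*} [NormedAddCommGroup V] [InnerProductSpace ℝ V] [FiniteDimensional ℝ V]

/-- The Weyl group `W`: the subgroup of the isometry group of `V` generated by the
reflections in the roots. -/
def weylGroup (C : RootSystemCtx V) : Subgroup (V ≃ₗᵢ[ℝ] V) :=
  Subgroup.closure {g | ∃ α ∈ C.roots, g = reflRoot α}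

/-- The simple roots: the positive roots which are not the sum of two positive roots. -/
def simpleRoots (C : RootSystemCtx V) : Set V :=
  {α ∈ C.pos | ¬ ∃ β ∈ C.pos, ∃ γ ∈ C.pos, α = β + γ}

/-- A weight `l` is dominant integral if `⟨l, α∨⟩` is a nonnegative integer for every
simple root `α`. -/
def IsDominant (C : RootSystemCtx V) (l : V) : Prop :=
  ∀ α ∈ C.simpleRoots, ∃ k : ℕ, 2 * ⟪l, α⟫ / ⟪α, α⟫ = (k : ℝ)

end RootSystemCtx

/-!
Along a Bruhat chain `w = x₀ < x₀ s_{β₁} < ⋯ < wu` with `βᵢ > 0`, each step contributes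
`x l - x s_β l = ⟨l, β∨⟩ • x β`. The coefficient is a natural number: for a dominant `l` this
holds for all positive coroots, by induction on the height `⟪β, 2ρ⟫`, reflecting `β` in a simple
root `α` with `⟪α, β⟫ > 0`. And `x β > 0`: otherwise the inversions of `x s_β` inject into
those of `x`, contradicting `ℓ(x) < ℓ(x s_β)`.
-/

section Reflections

variable {V : Type*} [NormedAddCommGroup V] [InnerProductSpace ℝ V]

/-- `⟨x, α∨⟩`, the pairing of `x` with the coroot `α∨ = 2α/⟪α, α⟫`. -/
def pairCoroot (x α : V) : ℝ := 2 * ⟪x, α⟫ / ⟪α, α⟫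

lemma reflRoot_apply (α x : V) : reflRoot α x = x - pairCoroot x α • α := by
  rw [reflRoot, Submodule.reflection_orthogonal_apply, Submodule.reflection_singleton_apply,
    pairCoroot, real_inner_self_eq_norm_sq, real_inner_comm]
  simp only [RCLike.ofReal_real_eq_id, id_eq]
  module

lemma reflRoot_self (α : V) : reflRoot α α = -α :=
  Submodule.reflection_orthogonalComplement_singleton_eq_neg α

lemma reflRoot_neg (α : V) : reflRoot (-α) = reflRoot α := by
  simp only [reflRoot, ← Set.neg_singleton, Submodule.span_neg]

lemma reflRoot_reflRoot (α x : V) : reflRoot α (reflRoot α x) = x :=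
  Submodule.reflection_reflection _ x

lemma pairCoroot_map (g : V ≃ₗᵢ[ℝ] V) (x α : V) : pairCoroot (g x) (g α) = pairCoroot x α := by
  simp only [pairCoroot, LinearIsometryEquiv.inner_map_map]

lemma pairCoroot_sub_smul (x y α : V) (c : ℝ) :
    pairCoroot (x - c • y) α = pairCoroot x α - c * pairCoroot y α := by
  simp only [pairCoroot, inner_sub_left, real_inner_smul_left]
  ring

lemma pairCoroot_neg (x α : V) : pairCoroot (-x) α = -pairCoroot x α := by
  simp only [pairCoroot, inner_neg_left]
  ring

lemma pairCoroot_pos_iff {x α : V} (hα : α ≠ 0) : 0 < pairCoroot x α ↔ 0 < ⟪x, α⟫ := by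
  rw [pairCoroot, lt_div_iff₀ (real_inner_self_pos.2 hα), zero_mul]
  constructor <;> intro h <;> linarith

lemma pairCoroot_nonneg_iff {x α : V} (hα : α ≠ 0) : 0 ≤ pairCoroot x α ↔ 0 ≤ ⟪x, α⟫ := by
  rw [pairCoroot, le_div_iff₀ (real_inner_self_pos.2 hα), zero_mul]
  constructor <;> intro h <;> linarith

lemma pairCoroot_mul_pairCoroot_lt_four {α β : V} (hα : α ≠ 0) (hβ : β ≠ 0)
    (hind : ∀ r : ℝ, β ≠ r • α) : pairCoroot α β * pairCoroot β α < 4 := by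
  have hlt : |⟪α, β⟫| < ‖α‖ * ‖β‖ := by
    refine (abs_real_inner_le_norm α β).lt_of_ne fun h => ?_
    obtain ⟨r, -, hr⟩ := (norm_inner_eq_norm_iff (𝕜 := ℝ) hα hβ).1 h
    exact hind r hr
  have hsq : ⟪α, β⟫ ^ 2 < ⟪α, α⟫ * ⟪β, β⟫ := by
    rw [real_inner_self_eq_norm_sq, real_inner_self_eq_norm_sq, ← mul_pow, ← sq_abs]
    exact pow_lt_pow_left₀ hlt (abs_nonneg _) two_ne_zero
  have hαα := real_inner_self_pos.2 hα
  have hββ := real_inner_self_pos.2 hβ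
  rw [pairCoroot, pairCoroot, real_inner_comm α β, div_mul_div_comm,
    div_lt_iff₀ (mul_pos hββ hαα)]
  nlinarith

end Reflections

lemma exists_finset_sum_eq_of_mem_span_nat {E : Type*} [AddCommGroup E] [Module ℝ E] {s : Set E}
    {v : E} (hv : v ∈ Submodule.span ℕ s) :
    ∃ (t : Finset E) (c : E → ℕ), ↑t ⊆ s ∧ v = ∑ α ∈ t, (c α : ℝ) • α := by
  obtain ⟨c, hcs, rfl⟩ := Submodule.mem_span_set.1 hv
  exact ⟨c.support, c, hcs, by simp [Finsupp.sum, Nat.cast_smul_eq_nsmul]⟩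

namespace RootSystemCtx

variable {V : Type*} [NormedAddCommGroup V] [InnerProductSpace ℝ V] [FiniteDimensional ℝ V]
  (C : RootSystemCtx V)

lemma pos_finite : C.pos.Finite := C.finite.subset C.pos_subset

lemma neg_mem_roots {α : V} (hα : α ∈ C.roots) : -α ∈ C.roots := by
  simpa only [reflRoot_self] using C.reflect_mem α hα α hα

lemma neg_mem_pos_of_notMem_pos {α : V} (hα : α ∈ C.roots) (h : α ∉ C.pos) : -α ∈ C.pos :=
  (C.mem_pos_or α hα).resolve_left h

lemma ne_neg_of_mem_pos {α β : V} (hα : α ∈ C.pos) (hβ : β ∈ C.pos) : α ≠ -β :=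
  fun h => C.not_pos_and_neg β hβ (h ▸ hα)

lemma exists_int_pairCoroot {β α : V} (hβ : β ∈ C.roots) (hα : α ∈ C.roots) :
    ∃ z : ℤ, pairCoroot β α = z :=
  C.crystallographic α hα β hβ

lemma pairCoroot_mul_lt_four {α β : V} (hα : α ∈ C.roots) (hβ : β ∈ C.roots) (h₁ : β ≠ α)
    (h₂ : β ≠ -α) : pairCoroot α β * pairCoroot β α < 4 := by
  refine pairCoroot_mul_pairCoroot_lt_four (C.nonzero α hα) (C.nonzero β hβ) fun r hr => ?_
  rcases C.reduced α hα r (hr ▸ hβ) with rfl | rfl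
  · exact h₁ (by rw [hr, one_smul])
  · exact h₂ (by rw [hr, neg_one_smul])

lemma sub_mem_roots_of_inner_pos {α β : V} (hα : α ∈ C.roots) (hβ : β ∈ C.roots) (hne : α ≠ β)
    (hinner : 0 < ⟪α, β⟫) : α - β ∈ C.roots := by
  obtain ⟨a, ha⟩ := C.exists_int_pairCoroot hα hβ
  obtain ⟨b, hb⟩ := C.exists_int_pairCoroot hβ hα
  have ha0 : 0 < a := by
    exact_mod_cast ha ▸ (pairCoroot_pos_iff (C.nonzero β hβ)).2 hinner
  have hb0 : 0 < b := by
    exact_mod_cast hb ▸ (pairCoroot_pos_iff (C.nonzero α hα)).2 (real_inner_comm α β ▸ hinner)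
  have hab : a * b < 4 := by
    have hβα : β ≠ -α := by
      rintro rfl
      rw [inner_neg_right, neg_pos] at hinner
      exact hinner.not_gt (real_inner_self_pos.2 (C.nonzero α hα))
    exact_mod_cast ha ▸ hb ▸ C.pairCoroot_mul_lt_four hα hβ hne.symm hβα
  obtain rfl | rfl : a = 1 ∨ b = 1 := by
    by_contra! h
    nlinarith [h.1.lt_of_le' ha0, h.2.lt_of_le' hb0]
  · simpa [reflRoot_apply, ha] using C.reflect_mem β hβ α hα
  · simpa [reflRoot_apply, hb] using C.neg_mem_roots (C.reflect_mem α hα β hβ)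

lemma add_mem_roots_of_inner_neg {α β : V} (hα : α ∈ C.roots) (hβ : β ∈ C.roots)
    (hne : α ≠ -β) (hinner : ⟪α, β⟫ < 0) : α + β ∈ C.roots := by
  simpa using C.sub_mem_roots_of_inner_pos hα (C.neg_mem_roots hβ) hne
    (by rwa [inner_neg_right, neg_pos])

lemma add_add_smul_ne_zero {δ μ ν : V} (hδ : δ ∈ C.pos) (hμ : μ ∈ C.pos) (hν : ν ∈ C.pos)
    (n : ℕ) : δ + μ + (n : ℝ) • ν ≠ 0 := by
  induction n generalizing δ μ with
  | zero => simpa [add_eq_zero_iff_eq_neg] using C.ne_neg_of_mem_pos hδ hμ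
  | succ n ih =>
    intro h
    -- one of `δ, μ` is obtuse to `ν`; adding `ν` to it gives a positive root and lowers `n`
    have hobtuse : ⟪δ, ν⟫ + ⟪μ, ν⟫ < 0 := by
      have hν0 := real_inner_self_pos.2 (C.nonzero ν (C.pos_subset hν))
      have := congrArg (⟪·, ν⟫) h
      simp only [inner_add_left, real_inner_smul_left, inner_zero_left] at this
      push_cast at this
      nlinarith
    wlog hδν : ⟪δ, ν⟫ < 0 generalizing δ μ
    · exact this hμ hδ (by rwa [add_comm μ]) (by linarith) (by linarith)
    have hroot := C.add_mem_roots_of_inner_neg (C.pos_subset hδ) (C.pos_subset hν)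
      (C.ne_neg_of_mem_pos hδ hν) hδν
    refine ih (C.pos_add δ hδ ν hν hroot) hμ ?_
    rw [← h]
    push_cast
    module

lemma exists_pairCoroot_eq_nat_of_mem_invSet {α δ : V} (hα : α ∈ C.pos)
    (hδ : δ ∈ invSet C.pos (reflRoot α)) : ∃ n : ℕ, pairCoroot δ α = n := by
  obtain ⟨hδ, hsδ⟩ := hδ
  obtain ⟨z, hz⟩ := C.exists_int_pairCoroot (C.pos_subset hδ) (C.pos_subset hα)
  obtain ⟨n, rfl | rfl⟩ := Int.eq_nat_or_neg z
  · exact ⟨n, hz⟩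
  · refine absurd ?_ (C.add_add_smul_ne_zero hδ hsδ hα n)
    rw [reflRoot_apply, hz]
    push_cast
    module

def twoRho : V := ∑ δ ∈ C.pos_finite.toFinset, δ

lemma inner_twoRho_pos {α : V} (hα : α ∈ C.pos) : 0 < ⟪α, C.twoRho⟫ := by
  classical
  have hαr := C.pos_subset hα
  have hrefl : ∀ δ, ⟪α, reflRoot α δ⟫ = -⟪α, δ⟫ := fun δ => by
    rw [← (reflRoot α).inner_map_map, reflRoot_self, reflRoot_reflRoot, inner_neg_left]
  rw [twoRho, inner_sum,
    ← Finset.sum_filter_add_sum_filter_not _ (fun δ => -(reflRoot α δ) ∈ C.pos)]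
  -- off the inversion set of `s_α`, the positive roots are permuted by `s_α`
  have hzero : ∑ δ ∈ C.pos_finite.toFinset with -(reflRoot α δ) ∉ C.pos, ⟪α, δ⟫ = 0 := by
    refine Finset.sum_involution (fun δ _ => reflRoot α δ)
      (fun δ _ => by rw [hrefl, add_neg_cancel])
      (fun δ _ hδ hfix => hδ (by linarith [hfix ▸ hrefl δ])) (fun δ hδ => ?_)
      (fun δ _ => reflRoot_reflRoot α δ)
    simp only [Finset.mem_filter, Set.Finite.mem_toFinset, reflRoot_reflRoot] at hδ ⊢
    refine ⟨?_, C.not_pos_and_neg δ hδ.1⟩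
    simpa using C.neg_mem_pos_of_notMem_pos (C.neg_mem_roots (C.reflect_mem α hαr δ
      (C.pos_subset hδ.1))) hδ.2
  rw [hzero, add_zero]
  refine Finset.sum_pos' (fun δ hδ => ?_) ⟨α, ?_, real_inner_self_pos.2 (C.nonzero α hαr)⟩
  · simp only [Finset.mem_filter, Set.Finite.mem_toFinset] at hδ
    obtain ⟨n, hn⟩ := C.exists_pairCoroot_eq_nat_of_mem_invSet hα hδ
    rw [real_inner_comm, ← pairCoroot_nonneg_iff (C.nonzero α hαr), hn]
    exact n.cast_nonneg
  · simpa [reflRoot_self] using hα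

lemma pos_induction {P : V → Prop}
    (step : ∀ β ∈ C.pos, (∀ γ ∈ C.pos, ⟪γ, C.twoRho⟫ < ⟪β, C.twoRho⟫ → P γ) → P β)
    {β : V} (hβ : β ∈ C.pos) : P β :=
  (Set.wellFoundedOn_image.1 ((C.pos_finite.image fun γ => ⟪γ, C.twoRho⟫).wellFoundedOn
    (r := (· < ·)))).induction hβ step

lemma exists_simpleRoot_inner_pos {β v : V} (hβ : β ∈ C.pos) (hv : 0 < ⟪β, v⟫) :
    ∃ α ∈ C.simpleRoots, 0 < ⟪α, v⟫ := by
  refine C.pos_induction (P := fun β => 0 < ⟪β, v⟫ → ∃ α ∈ C.simpleRoots, 0 < ⟪α, v⟫)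
    (fun β hβ ih hv => ?_) hβ hv
  by_cases hs : β ∈ C.simpleRoots
  · exact ⟨β, hs, hv⟩
  obtain ⟨γ, hγ, δ, hδ, rfl⟩ : ∃ γ ∈ C.pos, ∃ δ ∈ C.pos, β = γ + δ := by
    by_contra h
    exact hs ⟨hβ, h⟩
  have hγρ := C.inner_twoRho_pos hγ
  have hδρ := C.inner_twoRho_pos hδ
  rw [inner_add_left] at hv
  rcases lt_or_ge 0 ⟪γ, v⟫ with h | h
  · exact ih γ hγ (by rw [inner_add_left]; linarith) h
  · exact ih δ hδ (by rw [inner_add_left]; linarith) (by linarith)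

lemma sub_mem_pos_of_simpleRoot {α β : V} (hα : α ∈ C.simpleRoots) (hβ : β ∈ C.pos) (hβα : β ≠ α)
    (hinner : 0 < ⟪β, α⟫) : β - α ∈ C.pos := by
  have hroot := C.sub_mem_roots_of_inner_pos (C.pos_subset hβ) (C.pos_subset hα.1) hβα hinner
  refine (C.mem_pos_or _ hroot).resolve_right fun h => hα.2 ⟨β, hβ, -(β - α), h, ?_⟩
  abel

lemma add_ne_smul_simpleRoot {α β δ : V} (hα : α ∈ C.simpleRoots) (hβ : β ∈ C.pos)
    (hδ : δ ∈ C.pos) (hβα : β ≠ α) (hδα : δ ≠ α) (n : ℕ) : β + δ ≠ (n : ℝ) • α := by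
  induction n generalizing β δ with
  | zero => simpa [add_eq_zero_iff_eq_neg] using C.ne_neg_of_mem_pos hβ hδ
  | succ n ih =>
    intro h
    have hpos : 0 < ⟪β, α⟫ + ⟪δ, α⟫ := by
      rw [← inner_add_left, h, real_inner_smul_left]
      exact mul_pos (by positivity) (real_inner_self_pos.2 (C.nonzero α (C.pos_subset hα.1)))
    wlog hβα' : 0 < ⟪β, α⟫ generalizing β δ
    · exact this hδ hβ hδα hβα (by rwa [add_comm]) (by linarith) (by linarith)
    refine ih (C.sub_mem_pos_of_simpleRoot hα hβ hβα hβα') hδ (fun h2 => ?_) hδα ?_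
    · have h2α : (2 : ℝ) • α ∈ C.roots := by
        rw [two_smul, ← eq_add_of_sub_eq h2]
        exact C.pos_subset hβ
      have := C.reduced α (C.pos_subset hα.1) 2 h2α
      norm_num at this
    · rw [sub_add_eq_add_sub, h]
      push_cast
      module

lemma reflRoot_mem_pos_of_simpleRoot {α β : V} (hα : α ∈ C.simpleRoots) (hβ : β ∈ C.pos)
    (hβα : β ≠ α) : reflRoot α β ∈ C.pos := by
  by_contra hneg
  have hinv : β ∈ invSet C.pos (reflRoot α) := ⟨hβ,
    C.neg_mem_pos_of_notMem_pos (C.reflect_mem α (C.pos_subset hα.1) β (C.pos_subset hβ)) hneg⟩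
  obtain ⟨n, hn⟩ := C.exists_pairCoroot_eq_nat_of_mem_invSet hα.1 hinv
  refine C.add_ne_smul_simpleRoot hα hβ hinv.2 hβα (fun h => hβα ?_) n ?_
  · rw [← reflRoot_reflRoot α β, ← neg_neg (reflRoot α β), h, map_neg, reflRoot_self, neg_neg]
  · rw [reflRoot_apply, hn]
    abel

lemma IsDominant.exists_pairCoroot_eq_nat {C : RootSystemCtx V} {l : V} (hl : C.IsDominant l)
    {β : V} (hβ : β ∈ C.pos) : ∃ k : ℕ, pairCoroot l β = k := by
  refine C.pos_induction (P := fun β => ∃ k : ℕ, pairCoroot l β = k) (fun β hβ ih => ?_) hβ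
  by_cases hs : β ∈ C.simpleRoots
  · exact hl β hs
  have hβ0 := C.nonzero β (C.pos_subset hβ)
  obtain ⟨α, hα, hαβ⟩ := C.exists_simpleRoot_inner_pos hβ (real_inner_self_pos.2 hβ0)
  have hα0 := C.nonzero α (C.pos_subset hα.1)
  have hβα : β ≠ α := fun h => hs (h ▸ hα)
  obtain ⟨k, hk⟩ := hl α hα
  obtain ⟨z, hz⟩ := C.exists_int_pairCoroot (C.pos_subset hα.1) (C.pos_subset hβ)
  have hz0 : 0 ≤ z := by
    exact_mod_cast hz ▸ ((pairCoroot_nonneg_iff hβ0).2 hαβ.le)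
  -- `s_α β` is a positive root of smaller height, and `⟨l, β∨⟩ = ⟨s_α l, (s_α β)∨⟩`
  have hγ := C.reflRoot_mem_pos_of_simpleRoot hα hβ hβα
  have hγρ : ⟪reflRoot α β, C.twoRho⟫ < ⟪β, C.twoRho⟫ := by
    have hβα' := (pairCoroot_pos_iff hα0).2 (real_inner_comm α β ▸ hαβ)
    rw [reflRoot_apply, inner_sub_left, real_inner_smul_left]
    nlinarith [C.inner_twoRho_pos hα.1]
  obtain ⟨m, hm⟩ := ih _ hγ hγρ
  have key : pairCoroot l β = m + k * z := by
    have hαγ : pairCoroot α (reflRoot α β) = -z := by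
      rw [← pairCoroot_map (reflRoot α), reflRoot_self, reflRoot_reflRoot, pairCoroot_neg, hz]
    rw [← pairCoroot_map (reflRoot α), reflRoot_apply α l, show pairCoroot l α = k from hk,
      pairCoroot_sub_smul, hm, hαγ]
    ring
  lift z to ℕ using hz0
  exact ⟨m + k * z, by rw [key]; push_cast; ring⟩

lemma apply_mem_roots_iff {g : V ≃ₗᵢ[ℝ] V} (hg : g ∈ C.weylGroup) {β : V} :
    g β ∈ C.roots ↔ β ∈ C.roots := by
  induction hg using Subgroup.closure_induction generalizing β with
  | mem g hg =>
    obtain ⟨α, hα, rfl⟩ := hg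
    exact ⟨fun h => reflRoot_reflRoot α β ▸ C.reflect_mem α hα _ h, C.reflect_mem α hα β⟩
  | one => rfl
  | mul x y _ _ hx hy => exact hx.trans hy
  | inv x _ hx =>
    rw [← hx, LinearIsometryEquiv.coe_inv, LinearIsometryEquiv.apply_symm_apply]

lemma invLen_mul_reflRoot_le {x : V ≃ₗᵢ[ℝ] V} (hx : x ∈ C.weylGroup) {α : V} (hα : α ∈ C.pos)
    (hxα : -(x α) ∈ C.pos) : invLen C.pos (x * reflRoot α) ≤ invLen C.pos x := by
  classical
  have hαr := C.pos_subset hα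
  -- if `s_α γ < 0`, then `x γ + x (-s_α γ) = ⟨γ, α∨⟩ • x α` forces `x γ < 0`
  refine Set.ncard_le_ncard_of_injOn
    (fun γ => if reflRoot α γ ∈ C.pos then reflRoot α γ else γ) ?_ ?_
    (C.pos_finite.subset fun _ h => h.1)
  · rintro γ ⟨hγ, hxsγ⟩
    split_ifs with hsγ
    · exact ⟨hsγ, hxsγ⟩
    have hinv : γ ∈ invSet C.pos (reflRoot α) :=
      ⟨hγ, C.neg_mem_pos_of_notMem_pos (C.reflect_mem α hαr γ (C.pos_subset hγ)) hsγ⟩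
    obtain ⟨n, hn⟩ := C.exists_pairCoroot_eq_nat_of_mem_invSet hα hinv
    refine ⟨hγ, C.neg_mem_pos_of_notMem_pos ((C.apply_mem_roots_iff hx).2 (C.pos_subset hγ))
      fun hxγ => C.add_add_smul_ne_zero hxγ hxsγ hxα n ?_⟩
    rw [LinearIsometryEquiv.coe_mul, Function.comp_apply, reflRoot_apply, hn, map_sub, map_smul]
    module
  · rintro γ₁ ⟨hγ₁, -⟩ γ₂ ⟨hγ₂, -⟩ h
    dsimp only at h
    split_ifs at h with h₁ h₂ h₂
    · exact (reflRoot α).injective h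
    · exact absurd (by rwa [← h, reflRoot_reflRoot]) h₂
    · exact absurd (by rwa [h, reflRoot_reflRoot]) h₁
    · exact h

lemma mem_pos_of_invLen_lt {x : V ≃ₗᵢ[ℝ] V} (hx : x ∈ C.weylGroup) {α : V} (hα : α ∈ C.pos)
    (hlt : invLen C.pos x < invLen C.pos (x * reflRoot α)) : x α ∈ C.pos := by
  by_contra h
  exact (C.invLen_mul_reflRoot_le hx hα (C.neg_mem_pos_of_notMem_pos
    ((C.apply_mem_roots_iff hx).2 (C.pos_subset hα)) h)).not_gt hlt

lemma sub_apply_mul_reflRoot_mem_span {x : V ≃ₗᵢ[ℝ] V} (hx : x ∈ C.weylGroup) {α : V}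
    (hα : α ∈ C.roots) (hlt : invLen C.pos x < invLen C.pos (x * reflRoot α)) {l : V}
    (hl : C.IsDominant l) : x l - (x * reflRoot α) l ∈ Submodule.span ℕ C.pos := by
  obtain ⟨β, hβ, hαβ⟩ : ∃ β ∈ C.pos, reflRoot α = reflRoot β := by
    rcases C.mem_pos_or α hα with h | h
    exacts [⟨α, h, rfl⟩, ⟨-α, h, (reflRoot_neg α).symm⟩]
  rw [hαβ] at hlt ⊢
  obtain ⟨k, hk⟩ := hl.exists_pairCoroot_eq_nat hβ
  rw [LinearIsometryEquiv.coe_mul, Function.comp_apply, reflRoot_apply, hk, map_sub,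
    sub_sub_cancel, map_smul, Nat.cast_smul_eq_nsmul]
  exact Submodule.smul_mem _ k (Submodule.subset_span (C.mem_pos_of_invLen_lt hx hβ hlt))

lemma mem_weylGroup_of_bruhatLE {x y : V ≃ₗᵢ[ℝ] V} (hx : x ∈ C.weylGroup)
    (hxy : bruhatLE C.roots C.pos x y) : y ∈ C.weylGroup := by
  induction hxy with
  | refl => exact hx
  | tail _ hyz ih =>
    obtain ⟨⟨α, hα, rfl⟩, -⟩ := hyz
    exact mul_mem ih (Subgroup.subset_closure ⟨α, hα, rfl⟩)

lemma sub_mem_span_of_bruhatLE {x y : V ≃ₗᵢ[ℝ] V} (hx : x ∈ C.weylGroup)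
    (hxy : bruhatLE C.roots C.pos x y) {l : V} (hl : C.IsDominant l) :
    x l - y l ∈ Submodule.span ℕ C.pos := by
  induction hxy with
  | refl => simp
  | @tail z _ hxz hzy ih =>
    obtain ⟨⟨α, hα, rfl⟩, hlt⟩ := hzy
    rw [← sub_add_sub_cancel _ (z l)]
    exact add_mem ih
      (C.sub_apply_mul_reflRoot_mem_span (C.mem_weylGroup_of_bruhatLE hx hxz) hα hlt hl)

end RootSystemCtx

theorem statement4_general {V : Type*} [NormedAddCommGroup V] [InnerProductSpace ℝ V]
    [FiniteDimensional ℝ V] (C : RootSystemCtx V)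
    (w u : V ≃ₗᵢ[ℝ] V) (hw : w ∈ C.weylGroup)
    (hle : bruhatLE C.roots C.pos w (w * u))
    (l : V) (hl : C.IsDominant l) :
    ∃ (s : Finset V) (c : V → ℕ), ↑s ⊆ C.pos ∧
      w (l - u l) = ∑ α ∈ s, (c α : ℝ) • α := by
  rw [map_sub]
  exact exists_finset_sum_eq_of_mem_span_nat (C.sub_mem_span_of_bruhatLE hw hle hl)

/-- if `w ≤ wu` in the Bruhat order and `λ` is a dominant integral weight,
then `w(λ - uλ)` is a nonnegative integer linear combination of positive roots. -/
theorem statement4 {V : Type*} [NormedAddCommGroup V] [InnerProductSpace ℝ V]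
    [FiniteDimensional ℝ V] (C : RootSystemCtx V)
    (w u : V ≃ₗᵢ[ℝ] V) (hw : w ∈ C.weylGroup) (hu : u ∈ C.weylGroup)
    (hle : bruhatLE C.roots C.pos w (w * u))
    (l : V) (hl : C.IsDominant l) :
    ∃ (s : Finset V) (c : V → ℕ), ↑s ⊆ C.pos ∧
      w (l - u l) = ∑ α ∈ s, (c α : ℝ) • α :=
  statement4_general C w u hw hle l hl

end
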